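/- There does not exist an S(3, K_4^{(3)}+e, 5), i.e., the collection of all 3-element subsets of a 5-element set cannot be partitioned into copies of K_4^{(3)}+e. -/
import Mathlib

set_option maxRecDepth 100000

/-- The edge set of the 3-uniform hypergraph `K₄⁽³⁾+e` on vertex set `{0,1,2,3,4}`:
edges `{0,1,2},{0,1,3},{0,2,3},{1,2,3},{2,3,4}`. -/
def K43e : Finset (Finset (Fin 5)) :=
  {{0, 1, 2}, {0, 1, 3}, {0, 2, 3}, {1, 2, 3}, {2, 3, 4}}

/-- `B` is (the edge set of) a copy of `K₄⁽³⁾+e` on the type `α`, i.e. the image of the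
edge set of `K₄⁽³⁾+e` under an injection of its vertex set into `α`. -/
def IsK43eCopy {α : Type*} [DecidableEq α] (B : Finset (Finset α)) : Prop :=
  ∃ f : Fin 5 → α, Function.Injective f ∧ B = K43e.image (fun e => e.image f)

/-- Existence of an `S(3, K₄⁽³⁾+e, v)`: a collection of copies of `K₄⁽³⁾+e` on a
`v`-element set whose edge sets partition the 3-element subsets. -/
def HasS (v : ℕ) : Prop :=
  ∃ 𝒟 : Set (Finset (Finset (Fin v))),
    (∀ B ∈ 𝒟, IsK43eCopy B) ∧
    ∀ T : Finset (Fin v), T.card = 3 → ∃! B, B ∈ 𝒟 ∧ T ∈ B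

set_option maxHeartbeats 1000000 in
lemma key120 : ∀ g : Equiv.Perm (Fin 5),
    K43e ∪ K43e.image (fun e => e.image g) ≠ Finset.univ.powersetCard 3 := by decide

lemma pow_invariant (σ : Equiv.Perm (Fin 5)) :
    ((Finset.univ : Finset (Fin 5)).powersetCard 3).image (fun e => e.image σ) =
      Finset.univ.powersetCard 3 := by
  ext T
  simp only [Finset.mem_image, Finset.mem_powersetCard, Finset.subset_univ, true_and]
  constructor
  · rintro ⟨S, hS, rfl⟩
    rw [Finset.card_image_of_injective _ σ.injective]; exact hS
  · intro hT
    refine ⟨T.image σ.symm, ?_, ?_⟩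
    · rw [Finset.card_image_of_injective _ σ.symm.injective]; exact hT
    · rw [Finset.image_image]
      simp [Function.comp]

lemma copy_card {B : Finset (Finset (Fin 5))} (h : IsK43eCopy B) : B.card = 5 := by
  obtain ⟨f, hf, rfl⟩ := h
  rw [Finset.card_image_of_injective _ (Finset.image_injective hf)]
  decide

lemma copy_subset {B : Finset (Finset (Fin 5))} (h : IsK43eCopy B) :
    B ⊆ Finset.univ.powersetCard 3 := by
  obtain ⟨f, hf, rfl⟩ := h
  have h3 : ∀ e ∈ K43e, e.card = 3 := by decide
  intro T hT
  obtain ⟨e, he, rfl⟩ := Finset.mem_image.mp hT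
  rw [Finset.mem_powersetCard]
  refine ⟨Finset.subset_univ _, ?_⟩
  rw [Finset.card_image_of_injective _ hf]
  exact h3 e he

lemma copy_perm {B : Finset (Finset (Fin 5))} (h : IsK43eCopy B) :
    ∃ σ : Equiv.Perm (Fin 5), B = K43e.image (fun e => e.image σ) := by
  obtain ⟨f, hf, rfl⟩ := h
  refine ⟨Equiv.ofBijective f (Finite.injective_iff_bijective.mp hf), ?_⟩
  rfl

lemma img_comp (σ τ : Equiv.Perm (Fin 5)) (s : Finset (Finset (Fin 5))) :
    (s.image (fun e => e.image τ)).image (fun e => e.image σ) =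
      s.image (fun e => e.image (σ * τ)) := by
  rw [Finset.image_image]
  refine Finset.image_congr fun e _ => ?_
  rw [Function.comp_apply, Finset.image_image]
  rfl

lemma img_one (s : Finset (Finset (Fin 5))) :
    s.image (fun e => e.image ((1 : Equiv.Perm (Fin 5)) : Fin 5 → Fin 5)) = s := by
  simp

set_option maxHeartbeats 2000000 in
/-- There is no `S(3, K₄⁽³⁾+e, 5)`. -/
theorem stmt_1 : ¬ HasS 5 := by
  rintro ⟨𝒟, hcopy, hpart⟩
  obtain ⟨B1, ⟨hB1D, hT0⟩, -⟩ := hpart {0, 1, 2} (by decide)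
  have hc1 := hcopy B1 hB1D
  have hB1sub := copy_subset hc1
  have hB1card := copy_card hc1
  -- there is a triple not in B1
  have hlt : B1.card < (Finset.univ.powersetCard 3 : Finset (Finset (Fin 5))).card := by
    rw [hB1card]; decide
  have hne : B1 ≠ Finset.univ.powersetCard 3 := fun h => by rw [h] at hlt; exact lt_irrefl _ hlt
  obtain ⟨T1, hT1P, hT1B1⟩ := Finset.exists_of_ssubset (Finset.ssubset_iff_subset_ne.mpr ⟨hB1sub, hne⟩)
  obtain ⟨B2, ⟨hB2D, hT1B2⟩, -⟩ := hpart T1 ((Finset.mem_powersetCard.mp hT1P).2)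
  have hc2 := hcopy B2 hB2D
  have hB2sub := copy_subset hc2
  have hB2card := copy_card hc2
  have hdisj : Disjoint B1 B2 := by
    rw [Finset.disjoint_left]
    intro T hTa hTb
    have hTcard := (Finset.mem_powersetCard.mp (hB1sub hTa)).2
    obtain ⟨B, -, huniq⟩ := hpart T hTcard
    have heq : B1 = B2 := (huniq B1 ⟨hB1D, hTa⟩).trans (huniq B2 ⟨hB2D, hTb⟩).symm
    exact hT1B1 (heq ▸ hT1B2)
  have hunion : B1 ∪ B2 = Finset.univ.powersetCard 3 := by
    apply Finset.eq_of_subset_of_card_le (Finset.union_subset hB1sub hB2sub)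
    rw [Finset.card_union_of_disjoint hdisj, hB1card, hB2card]
    decide
  obtain ⟨σ, hσ⟩ := copy_perm hc1
  obtain ⟨τ, hτ⟩ := copy_perm hc2
  apply key120 (σ⁻¹ * τ)
  have hcong := congrArg (Finset.image (fun e => e.image (σ⁻¹ : Equiv.Perm (Fin 5)))) hunion
  rw [Finset.image_union, hσ, hτ, img_comp, img_comp, inv_mul_cancel, img_one,
    pow_invariant] at hcong
  exact hcong
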